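/- For positive integers m, n with (m,n) ≠ (1,1), the maximum span of an interval total coloring of K_{m,n} is m+n+2; and W_τ(K_{1,1}) = 3. -/

import Mathlib

namespace ITC

variable {V : Type*}

/-- A total coloring: proper on vertices, edges, and incident vertex-edge pairs. -/
def IsTotalColoring (G : SimpleGraph V) (cv : V → ℕ) (ce : Sym2 V → ℕ) : Prop :=
  (∀ u v, G.Adj u v → cv u ≠ cv v) ∧
  (∀ e f, e ∈ G.edgeSet → f ∈ G.edgeSet → e ≠ f → (∃ w, w ∈ e ∧ w ∈ f) → ce e ≠ ce f) ∧
  (∀ v e, e ∈ G.edgeSet → v ∈ e → cv v ≠ ce e)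

/-- The set of colors on a vertex `v` together with its incident edges. -/
def palette (G : SimpleGraph V) (cv : V → ℕ) (ce : Sym2 V → ℕ) (v : V) : Set ℕ :=
  insert (cv v) {c | ∃ e ∈ G.edgeSet, v ∈ e ∧ ce e = c}

/-- Degree of a vertex. -/
noncomputable def deg (G : SimpleGraph V) (v : V) : ℕ := (G.neighborSet v).ncard

/-- An interval total `t`-coloring. -/
def IsIntervalTotalColoring (G : SimpleGraph V) (t : ℕ) (cv : V → ℕ)
    (ce : Sym2 V → ℕ) : Prop :=
  IsTotalColoring G cv ce ∧
  (∀ v, cv v ∈ Set.Icc 1 t) ∧ (∀ e ∈ G.edgeSet, ce e ∈ Set.Icc 1 t) ∧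
  (∀ c ∈ Set.Icc 1 t, (∃ v, cv v = c) ∨ (∃ e ∈ G.edgeSet, ce e = c)) ∧
  (∀ v, ∃ a, palette G cv ce v = Set.Icc a (a + deg G v))

def HasIntervalTotalColoring (G : SimpleGraph V) (t : ℕ) : Prop :=
  ∃ cv ce, IsIntervalTotalColoring G t cv ce

/-- Minimum span of interval total colorings. -/
noncomputable def wtau (G : SimpleGraph V) : ℕ := sInf {t | HasIntervalTotalColoring G t}

/-- Maximum span of interval total colorings. -/
noncomputable def Wtau (G : SimpleGraph V) : ℕ := sSup {t | HasIntervalTotalColoring G t}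

/-- Total chromatic number: least `k` such that there is a total coloring
with colors in `{1, …, k}`. -/
noncomputable def totalChromaticNumber (G : SimpleGraph V) : ℕ :=
  sInf {k | ∃ cv ce, IsTotalColoring G cv ce ∧ (∀ v, cv v ∈ Set.Icc 1 k) ∧
    ∀ e ∈ G.edgeSet, ce e ∈ Set.Icc 1 k}

/-- A proper edge coloring. -/
def IsProperEdgeColoring (G : SimpleGraph V) (ce : Sym2 V → ℕ) : Prop :=
  ∀ e f, e ∈ G.edgeSet → f ∈ G.edgeSet → e ≠ f → (∃ w, w ∈ e ∧ w ∈ f) → ce e ≠ ce f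

/-- Colors appearing on the edges incident to `v`. -/
def edgePalette (G : SimpleGraph V) (ce : Sym2 V → ℕ) (v : V) : Set ℕ :=
  {c | ∃ e ∈ G.edgeSet, v ∈ e ∧ ce e = c}

/-- An interval (edge) `t`-coloring. -/
def IsIntervalEdgeColoring (G : SimpleGraph V) (t : ℕ) (ce : Sym2 V → ℕ) : Prop :=
  IsProperEdgeColoring G ce ∧
  (∀ e ∈ G.edgeSet, ce e ∈ Set.Icc 1 t) ∧
  (∀ c ∈ Set.Icc 1 t, ∃ e ∈ G.edgeSet, ce e = c) ∧
  (∀ v, ∃ a, edgePalette G ce v = Set.Icc (a + 1) (a + deg G v))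

/-- The hypercube `Q_n`. -/
def hypercube (n : ℕ) : SimpleGraph (Fin n → Bool) where
  Adj u v := ∃! i, u i ≠ v i
  symm := by
    constructor
    rintro u v ⟨i, hi, hu⟩
    exact ⟨i, Ne.symm hi, fun j hj => hu j (Ne.symm hj)⟩
  loopless := by
    constructor
    rintro u ⟨i, hi, -⟩
    exact hi rfl

/-- The complete graph on `Fin (2*r)` minus the perfect matching joining `i` and `i+r`. -/
def Kminus (r : ℕ) : SimpleGraph (Fin (2 * r)) where
  Adj i j := i ≠ j ∧ ¬((i : ℕ) + r = (j : ℕ) ∨ (j : ℕ) + r = (i : ℕ))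
  symm := by
    constructor
    rintro i j ⟨h1, h2⟩
    exact ⟨h1.symm, fun h => h2 h.symm⟩
  loopless := by
    constructor
    rintro i ⟨h1, -⟩
    exact h1 rfl

/-- Blow up each vertex of `H` into a copy of `β` (no edges inside copies). -/
def blowup {α : Type*} (H : SimpleGraph α) (β : Type*) : SimpleGraph (α × β) where
  Adj u v := H.Adj u.1 v.1
  symm := ⟨fun _ _ h => H.adj_symm h⟩
  loopless := ⟨fun u h => H.irrefl h⟩

/-!
Upper bound: the palette of a vertex `v` is an interval of length `deg v`, and the two ends of
an edge share its color. Let `1` lie in the palette of `u` and `t` in that of `w`. If `u` and `w`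
lie on different sides they are adjacent, so `t ≤ 1 + m + n`. Otherwise some edge `wv` has color
at least `t - 1`, and `v` is adjacent to `u`, so `t - 1 ≤ 1 + m + n`; for `K_{1,1}` this case
forces `u = w` and `t ≤ 2`.

Lower bound: an explicit coloring of `K_{m,n}` for `n ≥ 2`, transported to `K_{m,1}` by
symmetry. Palettes need only be shown to lie in an interval of length `deg v`: a palette holds
`deg v + 1` distinct colors, so it then fills the interval.
-/

section Palette

variable {G : SimpleGraph V} {cv : V → ℕ} {ce : Sym2 V → ℕ} {t a c c' : ℕ} {u v w : V}

lemma palette_eq_insert_image (G : SimpleGraph V) (cv : V → ℕ) (ce : Sym2 V → ℕ) (v : V) :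
    palette G cv ce v = insert (cv v) (ce '' G.incidenceSet v) := by
  ext c
  simp [palette, SimpleGraph.incidenceSet, and_assoc]

lemma edge_mem_palette {e : Sym2 V} (he : e ∈ G.edgeSet) (hv : v ∈ e) :
    ce e ∈ palette G cv ce v :=
  Set.mem_insert_of_mem _ ⟨e, he, hv, rfl⟩

lemma exists_adj_of_mem_palette (hc : c ∈ palette G cv ce v) (hne : c ≠ cv v) :
    ∃ u, G.Adj v u ∧ ce s(v, u) = c := by
  obtain rfl | ⟨e, he, hv, rfl⟩ := hc
  · exact absurd rfl hne
  · obtain ⟨u, rfl⟩ := Sym2.mem_iff_exists.mp hv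
    exact ⟨u, he, rfl⟩

lemma exists_of_mem_palette (hc : c ∈ palette G cv ce v) :
    (∃ u, cv u = c) ∨ ∃ e ∈ G.edgeSet, ce e = c := by
  obtain rfl | ⟨e, he, -, rfl⟩ := hc
  · exact Or.inl ⟨v, rfl⟩
  · exact Or.inr ⟨e, he, rfl⟩

lemma IsTotalColoring.ncard_palette (h : IsTotalColoring G cv ce)
    (hfin : (G.neighborSet v).Finite) : (palette G cv ce v).ncard = deg G v + 1 := by
  classical
  obtain ⟨-, hedge, hvert⟩ := h
  have hinc : (G.incidenceSet v).ncard = deg G v :=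
    Set.ncard_congr' (G.incidenceSetEquivNeighborSet v)
  have hincfin : (G.incidenceSet v).Finite :=
    Set.finite_coe_iff.mp
      (@Finite.of_equiv _ _ hfin.to_subtype (G.incidenceSetEquivNeighborSet v).symm)
  have hinj : Set.InjOn ce (G.incidenceSet v) := fun e he f hf hef => by
    by_contra hne
    exact hedge e f he.1 hf.1 hne ⟨v, he.2, hf.2⟩ hef
  have hnot : cv v ∉ ce '' G.incidenceSet v := by
    rintro ⟨e, he, hce⟩
    exact hvert v e he.1 he.2 hce.symm
  rw [palette_eq_insert_image, Set.ncard_insert_of_notMem hnot (hincfin.image ce),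
    hinj.ncard_image, hinc]

lemma IsTotalColoring.palette_eq_Icc_of_subset (h : IsTotalColoring G cv ce)
    (hfin : (G.neighborSet v).Finite) (hsub : palette G cv ce v ⊆ Set.Icc a (a + deg G v)) :
    palette G cv ce v = Set.Icc a (a + deg G v) :=
  Set.eq_of_subset_of_ncard_le hsub (by rw [Set.ncard_Icc_nat, h.ncard_palette hfin]; omega)
    (Set.finite_Icc _ _)

lemma IsIntervalTotalColoring.of_palette_subset (h : IsTotalColoring G cv ce)
    (hfin : ∀ v, (G.neighborSet v).Finite) (hcv : ∀ v, cv v ∈ Set.Icc 1 t)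
    (hce : ∀ e ∈ G.edgeSet, ce e ∈ Set.Icc 1 t)
    (hcover : ∀ c ∈ Set.Icc 1 t, ∃ v, c ∈ palette G cv ce v)
    (hpal : ∀ v, ∃ a, palette G cv ce v ⊆ Set.Icc a (a + deg G v)) :
    IsIntervalTotalColoring G t cv ce :=
  ⟨h, hcv, hce, fun c hc => (hcover c hc).elim fun _ hv => exists_of_mem_palette hv,
    fun v => (hpal v).imp fun _ hsub => h.palette_eq_Icc_of_subset (hfin v) hsub⟩

namespace IsIntervalTotalColoring

lemma palette_subset (h : IsIntervalTotalColoring G t cv ce) :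
    palette G cv ce v ⊆ Set.Icc 1 t := by
  rintro c (rfl | ⟨e, he, -, rfl⟩)
  · exact h.2.1 v
  · exact h.2.2.1 e he

lemma exists_mem_palette (h : IsIntervalTotalColoring G t cv ce) (hc : c ∈ Set.Icc 1 t) :
    ∃ v, c ∈ palette G cv ce v := by
  obtain ⟨v, rfl⟩ | ⟨e, he, rfl⟩ := h.2.2.2.1 c hc
  · exact ⟨v, Set.mem_insert _ _⟩
  · induction e with
    | _ v w => exact ⟨v, edge_mem_palette he (Sym2.mem_mk_left v w)⟩

lemma le_add_deg (h : IsIntervalTotalColoring G t cv ce) (hc : c ∈ palette G cv ce v)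
    (hc' : c' ∈ palette G cv ce v) : c' ≤ c + deg G v := by
  obtain ⟨a, ha⟩ := h.2.2.2.2 v
  rw [ha, Set.mem_Icc] at hc hc'
  omega

lemma le_add_deg_add_deg (h : IsIntervalTotalColoring G t cv ce) (huv : G.Adj u v)
    (hc : c ∈ palette G cv ce u) (hc' : c' ∈ palette G cv ce v) :
    c' ≤ c + deg G u + deg G v := by
  have hu := h.le_add_deg hc (edge_mem_palette huv (Sym2.mem_mk_left u v))
  have hv := h.le_add_deg (edge_mem_palette huv (Sym2.mem_mk_right u v)) hc'
  omega

lemma exists_adj_le_add_one (h : IsIntervalTotalColoring G t cv ce)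
    (hw : t ∈ palette G cv ce w) (hdeg : 0 < deg G w) :
    ∃ v, G.Adj w v ∧ t ≤ ce s(w, v) + 1 := by
  obtain ⟨a, ha⟩ := h.2.2.2.2 w
  have htop : a + deg G w ≤ t :=
    (h.palette_subset (ha ▸ Set.right_mem_Icc.mpr (Nat.le_add_right _ _))).2
  have hw' := ha ▸ hw
  rw [Set.mem_Icc] at hw'
  by_cases hcv : cv w = t
  · obtain ⟨v, hv, hce⟩ := exists_adj_of_mem_palette
      (c := t - 1) (ha ▸ Set.mem_Icc.mpr ⟨by omega, by omega⟩) (by omega)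
    exact ⟨v, hv, by omega⟩
  · obtain ⟨v, hv, hce⟩ := exists_adj_of_mem_palette hw (Ne.symm hcv)
    exact ⟨v, hv, by omega⟩

lemma le_add_deg_add_deg_add_two (h : IsIntervalTotalColoring G t cv ce)
    (hu : 1 ∈ palette G cv ce u) (hw : t ∈ palette G cv ce w) (hdeg : 0 < deg G w)
    (hnbr : ∀ v, G.Adj w v → G.Adj u v) : ∃ v, G.Adj w v ∧ t ≤ deg G u + deg G v + 2 := by
  obtain ⟨v, hwv, hv⟩ := h.exists_adj_le_add_one hw hdeg
  have := h.le_add_deg_add_deg (hnbr v hwv) hu (edge_mem_palette hwv (Sym2.mem_mk_right w v))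
  exact ⟨v, hwv, by omega⟩

end IsIntervalTotalColoring

end Palette

section Iso

variable {W : Type*} {G : SimpleGraph V} {H : SimpleGraph W}

lemma palette_comp_iso (φ : G ≃g H) (cv : W → ℕ) (ce : Sym2 W → ℕ) (v : V) :
    palette G (cv ∘ φ) (ce ∘ Sym2.map φ) v = palette H cv ce (φ v) := by
  ext c
  simp only [palette, Set.mem_insert_iff, Set.mem_ofPred_eq, Function.comp_apply]
  refine or_congr_right ⟨fun ⟨e, he, hv, hc⟩ =>
    ⟨_, φ.map_mem_edgeSet_iff.mpr he, Sym2.mem_map.mpr ⟨v, hv, rfl⟩, hc⟩, ?_⟩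
  rintro ⟨e, he, hv, rfl⟩
  induction e with
  | _ x y =>
    refine ⟨s(φ.symm x, φ.symm y), φ.map_mem_edgeSet_iff.mp (by simpa using he), ?_, by simp⟩
    simpa [← φ.symm_apply_eq, eq_comm] using hv

lemma deg_iso_apply (φ : G ≃g H) (v : V) : deg H (φ v) = deg G v := by
  rw [deg, deg, ← φ.image_neighborSet, Set.ncard_image_of_injective _ φ.injective]

lemma HasIntervalTotalColoring.of_iso (φ : G ≃g H) {t : ℕ}
    (h : HasIntervalTotalColoring H t) : HasIntervalTotalColoring G t := by
  obtain ⟨cv, ce, hH⟩ := h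
  have ⟨⟨hvv, hee, hve⟩, hcv, hce, _, hpal⟩ := hH
  have hedge (e : Sym2 V) : Sym2.map φ e ∈ H.edgeSet ↔ e ∈ G.edgeSet :=
    φ.map_mem_edgeSet_iff
  have hmem (v : V) (e : Sym2 V) : v ∈ e → φ v ∈ Sym2.map φ e :=
    fun hv => Sym2.mem_map.mpr ⟨v, hv, rfl⟩
  refine ⟨cv ∘ φ, ce ∘ Sym2.map φ,
    ⟨fun u v huv => hvv _ _ (φ.map_adj_iff.mpr huv), ?_, ?_⟩,
    fun v => hcv (φ v), fun e he => hce _ ((hedge e).mpr he), ?_, ?_⟩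
  · rintro e f he hf hne ⟨w, hw, hw'⟩
    exact hee _ _ ((hedge e).mpr he) ((hedge f).mpr hf)
      (fun h => hne (Sym2.map.injective φ.injective h)) ⟨φ w, hmem w e hw, hmem w f hw'⟩
  · exact fun v e he hv => hve (φ v) _ ((hedge e).mpr he) (hmem v e hv)
  · intro c hc
    obtain ⟨v, hv⟩ := hH.exists_mem_palette hc
    exact exists_of_mem_palette (v := φ.symm v) (by rwa [palette_comp_iso, φ.apply_symm_apply])
  · intro v
    rw [palette_comp_iso, ← deg_iso_apply φ]
    exact hpal (φ v)

end Iso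

section CompleteBipartite

open SimpleGraph

variable {α β : Type*}

def completeBipartiteGraphComm (α β : Type*) :
    completeBipartiteGraph α β ≃g completeBipartiteGraph β α where
  toEquiv := Equiv.sumComm α β
  map_rel_iff' := by rintro (a | b) (a' | b') <;> simp

lemma deg_completeBipartiteGraph_inl (a : α) :
    deg (completeBipartiteGraph α β) (.inl a) = Nat.card β := by
  have : (completeBipartiteGraph α β).neighborSet (.inl a) = Set.range Sum.inr := by
    ext (a' | b) <;> simp
  rw [deg, this, Set.ncard_range_of_injective Sum.inr_injective]

lemma deg_completeBipartiteGraph_inr (b : β) :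
    deg (completeBipartiteGraph α β) (.inr b) = Nat.card α := by
  have : (completeBipartiteGraph α β).neighborSet (.inr b) = Set.range Sum.inl := by
    ext (a | b') <;> simp
  rw [deg, this, Set.ncard_range_of_injective Sum.inl_injective]

def bipartiteEdgeColoring (k : α → β → ℕ) : Sym2 (α ⊕ β) → ℕ :=
  Sym2.lift ⟨fun x y => match x, y with
    | .inl a, .inr b => k a b
    | .inr b, .inl a => k a b
    | _, _ => 0,
    by rintro (a | b) (a' | b') <;> rfl⟩

@[simp]
lemma bipartiteEdgeColoring_mk (k : α → β → ℕ) (a : α) (b : β) :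
    bipartiteEdgeColoring k s(.inl a, .inr b) = k a b := rfl

variable {f : α → ℕ} {g : β → ℕ} {k : α → β → ℕ}

lemma isTotalColoring_bipartiteEdgeColoring (hfg : ∀ a b, f a ≠ g b)
    (hfk : ∀ a b, f a ≠ k a b) (hgk : ∀ a b, g b ≠ k a b)
    (hrow : ∀ a, Function.Injective (k a)) (hcol : ∀ b, Function.Injective (k · b)) :
    IsTotalColoring (completeBipartiteGraph α β) (Sum.elim f g) (bipartiteEdgeColoring k) := by
  simp only [IsTotalColoring, edgeSet_completeBipartiteGraph]
  refine ⟨?_, ?_, ?_⟩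
  · rintro (a | b) (a' | b') hadj <;> simp at hadj
    · exact hfg a b'
    · exact (hfg a' b).symm
  · rintro _ _ ⟨⟨a, b⟩, rfl⟩ ⟨⟨a', b'⟩, rfl⟩ hne ⟨w, hw, hw'⟩ hk
    simp only [bipartiteEdgeColoring_mk] at hk
    rcases w with x | y <;> simp only [Sym2.mem_iff, Sum.inl.injEq, Sum.inr.injEq, reduceCtorEq,
      or_false, false_or] at hw hw' <;> subst hw hw'
    · exact hne (by rw [hrow x hk])
    · exact hne (by rw [hcol y hk])
  · rintro v _ ⟨⟨a, b⟩, rfl⟩ hv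
    rcases Sym2.mem_iff.mp hv with rfl | rfl
    · exact hfk a b
    · exact hgk a b

lemma palette_bipartiteEdgeColoring_inl (a : α) :
    palette (completeBipartiteGraph α β) (Sum.elim f g) (bipartiteEdgeColoring k) (.inl a) =
      insert (f a) (Set.range (k a)) := by
  ext c
  simp [palette, edgeSet_completeBipartiteGraph]

lemma palette_bipartiteEdgeColoring_inr (b : β) :
    palette (completeBipartiteGraph α β) (Sum.elim f g) (bipartiteEdgeColoring k) (.inr b) =
      insert (g b) (Set.range (k · b)) := by
  ext c
  simp [palette, edgeSet_completeBipartiteGraph]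

end CompleteBipartite

section CompleteBipartiteFin

open SimpleGraph

variable {m n t : ℕ}

lemma hasIntervalTotalColoring_completeBipartiteGraph (hm : 0 < m) (hn : 2 ≤ n) :
    HasIntervalTotalColoring (completeBipartiteGraph (Fin m) (Fin n)) (m + n + 2) := by
  set K := completeBipartiteGraph (Fin m) (Fin n)
  -- Column `0` is special: its edges jump over the left vertex colors `i + n + 1`,
  -- and its vertex takes the top color.
  set f : Fin m → ℕ := fun i => i + n + 1
  set g : Fin n → ℕ := fun j => if (j : ℕ) = 0 then m + n + 2 else j
  set k : Fin m → Fin n → ℕ := fun i j => if (j : ℕ) = 0 then i + n + 2 else i + j + 1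
  have htot : IsTotalColoring K (Sum.elim f g) (bipartiteEdgeColoring k) := by
    refine isTotalColoring_bipartiteEdgeColoring (fun i j => ?_) (fun i j => ?_)
      (fun i j => ?_) (fun i j j' hjj' => Fin.ext ?_) (fun j i i' hii' => Fin.ext ?_) <;>
    simp only [f, g, k] at * <;> split_ifs at * <;> omega
  have hpal_inl (i : Fin m) : palette K (Sum.elim f g) (bipartiteEdgeColoring k) (.inl i) ⊆
      Set.Icc (i + 2) (i + 2 + deg K (.inl i)) := by
    rw [palette_bipartiteEdgeColoring_inl, deg_completeBipartiteGraph_inl, Nat.card_fin,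
      Set.insert_subset_iff, Set.range_subset_iff]
    refine ⟨?_, fun j => ?_⟩ <;> simp only [f, k, Set.mem_Icc] <;> (try split_ifs) <;> omega
  have hpal : ∀ v, ∃ a, palette K (Sum.elim f g) (bipartiteEdgeColoring k) v ⊆
      Set.Icc a (a + deg K v) := by
    rintro (i | j)
    · exact ⟨_, hpal_inl i⟩
    · refine ⟨if (j : ℕ) = 0 then n + 2 else j, ?_⟩
      rw [palette_bipartiteEdgeColoring_inr, deg_completeBipartiteGraph_inr, Nat.card_fin,
        Set.insert_subset_iff, Set.range_subset_iff]
      refine ⟨?_, fun i => ?_⟩ <;> simp only [g, k, Set.mem_Icc] <;> (try split_ifs) <;> omega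
  have hcover : ∀ c ∈ Set.Icc 1 (m + n + 2),
      ∃ v, c ∈ palette K (Sum.elim f g) (bipartiteEdgeColoring k) v := by
    rintro c ⟨hlo, hhi⟩
    by_cases hbot : c = 1
    · refine ⟨.inr ⟨1, hn⟩, ?_⟩
      rw [palette_bipartiteEdgeColoring_inr]
      exact Or.inl (by simp [g, hbot])
    by_cases htop : c = m + n + 2
    · refine ⟨.inr ⟨0, by omega⟩, ?_⟩
      rw [palette_bipartiteEdgeColoring_inr]
      exact Or.inl (by simp [g, htop])
    · -- the palettes `[i + 2, i + n + 2]` of the left vertices cover `[2, m + n + 1]`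
      refine ⟨.inl ⟨min (c - 2) (m - 1), by omega⟩, ?_⟩
      rw [htot.palette_eq_Icc_of_subset (Set.toFinite _) (hpal_inl _),
        deg_completeBipartiteGraph_inl, Nat.card_fin, Set.mem_Icc, Fin.val_mk]
      omega
  refine ⟨_, _, .of_palette_subset htot (fun _ => Set.toFinite _) ?_ ?_ hcover hpal⟩
  · rintro (i | j) <;> simp only [f, g, Sum.elim_inl, Sum.elim_inr, Set.mem_Icc] <;>
      (try split_ifs) <;> omega
  · simp only [K, edgeSet_completeBipartiteGraph]
    rintro _ ⟨⟨i, j⟩, rfl⟩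
    simp only [bipartiteEdgeColoring_mk, k, Set.mem_Icc]
    split_ifs <;> omega

lemma hasIntervalTotalColoring_completeBipartiteGraph_one_one :
    HasIntervalTotalColoring (completeBipartiteGraph (Fin 1) (Fin 1)) 3 := by
  have htot : IsTotalColoring (completeBipartiteGraph (Fin 1) (Fin 1))
      (Sum.elim (fun _ => 1) (fun _ => 3)) (bipartiteEdgeColoring fun _ _ => 2) :=
    isTotalColoring_bipartiteEdgeColoring (by simp) (by simp) (by simp)
      (fun _ => Function.injective_of_subsingleton _)
      (fun _ => Function.injective_of_subsingleton _)
  refine ⟨_, _, .of_palette_subset htot (fun _ => Set.toFinite _) ?_ ?_ ?_ ?_⟩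
  · rintro (i | j) <;> simp
  · simp [edgeSet_completeBipartiteGraph]
  · rintro c ⟨hc1, hc3⟩
    refine ⟨if c ≤ 2 then .inl 0 else .inr 0, ?_⟩
    split_ifs <;>
    simp only [palette_bipartiteEdgeColoring_inl, palette_bipartiteEdgeColoring_inr,
      Set.range_const, Set.mem_insert_iff, Set.mem_singleton_iff] <;>
    omega
  · rintro (i | j)
    · refine ⟨1, ?_⟩
      simp [palette_bipartiteEdgeColoring_inl, deg_completeBipartiteGraph_inl,
        Set.insert_subset_iff]
    · refine ⟨2, ?_⟩
      simp [palette_bipartiteEdgeColoring_inr, deg_completeBipartiteGraph_inr,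
        Set.insert_subset_iff]

lemma le_of_hasIntervalTotalColoring_completeBipartiteGraph (hm : 0 < m) (hn : 0 < n)
    (h : HasIntervalTotalColoring (completeBipartiteGraph (Fin m) (Fin n)) t) :
    t ≤ m + n + 2 := by
  obtain ⟨cv, ce, h⟩ := h
  rcases Nat.eq_zero_or_pos t with rfl | ht
  · omega
  obtain ⟨u, hu⟩ := h.exists_mem_palette (c := 1) ⟨le_rfl, ht⟩
  obtain ⟨w, hw⟩ := h.exists_mem_palette (c := t) ⟨ht, le_rfl⟩
  have hl (i : Fin m) : deg (completeBipartiteGraph (Fin m) (Fin n)) (.inl i) = n := by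
    simp [deg_completeBipartiteGraph_inl]
  have hr (j : Fin n) : deg (completeBipartiteGraph (Fin m) (Fin n)) (.inr j) = m := by
    simp [deg_completeBipartiteGraph_inr]
  rcases u with i | j <;> rcases w with i' | j'
  · obtain ⟨v, hv, ht⟩ :=
      h.le_add_deg_add_deg_add_two hu hw ((hl i').symm ▸ hn) (by rintro (_ | _) <;> simp)
    rcases v with _ | j
    · simp at hv
    · rw [hl, hr] at ht
      omega
  · have := h.le_add_deg_add_deg (by simp) hu hw
    rw [hl, hr] at this
    omega
  · have := h.le_add_deg_add_deg (by simp) hu hw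
    rw [hl, hr] at this
    omega
  · obtain ⟨v, hv, ht⟩ :=
      h.le_add_deg_add_deg_add_two hu hw ((hr j').symm ▸ hm) (by rintro (_ | _) <;> simp)
    rcases v with i | _
    · rw [hl, hr] at ht
      omega
    · simp at hv

lemma le_three_of_hasIntervalTotalColoring_completeBipartiteGraph_one_one
    (h : HasIntervalTotalColoring (completeBipartiteGraph (Fin 1) (Fin 1)) t) : t ≤ 3 := by
  obtain ⟨cv, ce, h⟩ := h
  rcases Nat.eq_zero_or_pos t with rfl | ht
  · omega
  obtain ⟨u, hu⟩ := h.exists_mem_palette (c := 1) ⟨le_rfl, ht⟩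
  obtain ⟨w, hw⟩ := h.exists_mem_palette (c := t) ⟨ht, le_rfl⟩
  have hdeg (v : Fin 1 ⊕ Fin 1) : deg (completeBipartiteGraph (Fin 1) (Fin 1)) v = 1 := by
    rcases v with _ | _ <;> simp [deg_completeBipartiteGraph_inl, deg_completeBipartiteGraph_inr]
  by_cases huw : u = w
  · subst huw
    have := h.le_add_deg hu hw
    rw [hdeg] at this
    omega
  · have hadj : (completeBipartiteGraph (Fin 1) (Fin 1)).Adj u w := by
      fin_cases u <;> fin_cases w <;> simp_all
    have := h.le_add_deg_add_deg hadj hu hw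
    rw [hdeg, hdeg] at this
    omega

lemma hasIntervalTotalColoring_completeBipartiteGraph_of_ne (hm : 0 < m) (hn : 0 < n)
    (hne : ¬(m = 1 ∧ n = 1)) :
    HasIntervalTotalColoring (completeBipartiteGraph (Fin m) (Fin n)) (m + n + 2) := by
  rcases Nat.lt_or_ge n 2 with hn2 | hn2
  · obtain rfl : n = 1 := by omega
    rw [add_comm m 1]
    exact (hasIntervalTotalColoring_completeBipartiteGraph Nat.one_pos (by omega)).of_iso
      (completeBipartiteGraphComm (Fin m) (Fin 1))
  · exact hasIntervalTotalColoring_completeBipartiteGraph hm hn2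

end CompleteBipartiteFin

theorem stmt13 (m n : ℕ) (hm : 0 < m) (hn : 0 < n) :
    (¬(m = 1 ∧ n = 1) →
      Wtau (completeBipartiteGraph (Fin m) (Fin n)) = m + n + 2) ∧
    Wtau (completeBipartiteGraph (Fin 1) (Fin 1)) = 3 :=
  ⟨fun hne => IsGreatest.csSup_eq
      ⟨hasIntervalTotalColoring_completeBipartiteGraph_of_ne hm hn hne,
        fun _ => le_of_hasIntervalTotalColoring_completeBipartiteGraph hm hn⟩,
    IsGreatest.csSup_eq ⟨hasIntervalTotalColoring_completeBipartiteGraph_one_one,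
      fun _ => le_three_of_hasIntervalTotalColoring_completeBipartiteGraph_one_one⟩⟩

end ITC
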